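/- Let γ = Σ k_I·I be a formal ℕ-combination of intervals from ℐ(s) (s ≥ 1). Then the independence number α(γ) of the multigraph expansion of γ equals the maximum over ε ∈ {0,1}^s of Σ_{I ∈ ℐ(s,ε)} k_I. -/

import Mathlib

open scoped Classical

def AdjN (p q : ℕ × ℕ) : Prop :=
  ∃ x : ℝ, Set.Icc (p.1 : ℝ) p.2 ∩ Set.Icc (q.1 : ℝ) q.2 = {x}

def memIs (s : ℕ) (p : ℕ × ℕ) : Prop :=
  p = (0, 1) ∨ p = (s, s + 1) ∨ (1 ≤ p.1 ∧ p.1 < p.2 ∧ p.2 ≤ s)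

def memIsε (s : ℕ) (ε : ℕ → Bool) (p : ℕ × ℕ) : Prop :=
  (1 ≤ p.1 ∧ p.1 < p.2 ∧ p.2 ≤ s ∧ ε p.1 = false ∧ ε p.2 = true) ∨
  (p = (0, 1) ∧ ε 1 = true) ∨ (p = (s, s + 1) ∧ ε s = false)

/-!
Two nondegenerate integer intervals meet in exactly one point iff one ends where the other
starts. Given an independent sub-multiset `t`, mark `i` with `ε i = true` iff some interval of
`t` ends at `i`; independence says no interval of `t` starts at a marked point, so `t` lies in
`ℐ(s,ε)`. Conversely, in `ℐ(s,ε)` every interval ends at a marked point or at `s + 1` and starts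
at an unmarked point or at `0`, so no two of them touch.
-/

theorem adjN_iff {p q : ℕ × ℕ} (hp : p.1 < p.2) (hq : q.1 < q.2) :
    AdjN p q ↔ p.2 = q.1 ∨ q.2 = p.1 := by
  simp only [AdjN, Set.Icc_inter_Icc, Set.Icc_eq_singleton_iff]
  constructor
  · rintro ⟨x, hmax, hmin⟩
    have : max p.1 q.1 = min p.2 q.2 := by exact_mod_cast hmax.trans hmin.symm
    omega
  · intro h
    have : max p.1 q.1 = min p.2 q.2 := by omega
    exact ⟨max p.1 q.1, rfl, by exact_mod_cast this.symm⟩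

namespace memIs

variable {s : ℕ} {p : ℕ × ℕ}

theorem fst_lt_snd (h : memIs s p) : p.1 < p.2 := by
  rcases h with rfl | rfl | h <;> simp [*]

end memIs

namespace memIsε

variable {s : ℕ} {ε : ℕ → Bool} {p q : ℕ × ℕ}

theorem fst_lt_snd (h : memIsε s ε p) : p.1 < p.2 := by
  rcases h with h | ⟨rfl, -⟩ | ⟨rfl, -⟩ <;> simp [*]

theorem fst_le (h : memIsε s ε p) : p.1 ≤ s := by
  rcases h with h | ⟨rfl, -⟩ | ⟨rfl, -⟩
  exacts [by omega, Nat.zero_le s, le_rfl]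

theorem snd_eq_succ_or (h : memIsε s ε p) : p.2 = s + 1 ∨ ε p.2 = true := by
  rcases h with h | ⟨rfl, h⟩ | ⟨rfl, -⟩ <;> simp [*]

theorem fst_eq_zero_or (h : memIsε s ε p) : p.1 = 0 ∨ ε p.1 = false := by
  rcases h with h | ⟨rfl, -⟩ | ⟨rfl, h⟩ <;> simp [*]

theorem snd_ne_fst (hp : memIsε s ε p) (hq : memIsε s ε q) : p.2 ≠ q.1 := by
  intro he
  have hp_lt : p.1 < p.2 := hp.fst_lt_snd
  have hq_le : q.1 ≤ s := hq.fst_le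
  rcases hp.snd_eq_succ_or with hs | hmark <;> rcases hq.fst_eq_zero_or with h0 | hunmark
  all_goals first | omega | simp_all

theorem not_adjN (hp : memIsε s ε p) (hq : memIsε s ε q) : ¬ AdjN p q := by
  rw [adjN_iff hp.fst_lt_snd hq.fst_lt_snd]
  rintro (h | h)
  exacts [hp.snd_ne_fst hq h, hq.snd_ne_fst hp h]

end memIsε

theorem memIsε_of_forall_snd_ne_fst {s : ℕ} {t : Multiset (ℕ × ℕ)} (ht : ∀ p ∈ t, memIs s p)
    (hsep : ∀ p ∈ t, ∀ q ∈ t, p.2 ≠ q.1) {p : ℕ × ℕ} (hp : p ∈ t) :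
    memIsε s (fun i => decide (∃ q ∈ t, q.2 = i)) p := by
  have ends : ∃ q ∈ t, q.2 = p.2 := ⟨p, hp, rfl⟩
  have starts : ¬ ∃ q ∈ t, q.2 = p.1 := fun ⟨q, hq, he⟩ => hsep q hq p hp he
  rcases ht p hp with rfl | rfl | h
  · exact Or.inr (Or.inl ⟨rfl, by simpa using ends⟩)
  · exact Or.inr (Or.inr ⟨rfl, by simpa using starts⟩)
  · exact Or.inl ⟨h.1, h.2.1, h.2.2, by simpa using starts, by simpa using ends⟩

theorem stmt_12_general (s : ℕ) (γ : Multiset (ℕ × ℕ))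
    (hγ : ∀ p ∈ γ, memIs s p) :
    (∀ t ≤ γ, (∀ p ∈ t, ∀ q ∈ t, ¬ AdjN p q) →
      ∃ ε : ℕ → Bool,
        Multiset.card t ≤ Multiset.card (γ.filter (fun p => memIsε s ε p))) ∧
    (∀ ε : ℕ → Bool, ∃ t ≤ γ, (∀ p ∈ t, ∀ q ∈ t, ¬ AdjN p q) ∧
      Multiset.card t = Multiset.card (γ.filter (fun p => memIsε s ε p))) := by
  constructor
  · intro t htγ hindep
    have ht : ∀ p ∈ t, memIs s p := fun p hp => hγ p (Multiset.mem_of_le htγ hp)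
    have hsep : ∀ p ∈ t, ∀ q ∈ t, p.2 ≠ q.1 := fun p hp q hq he =>
      hindep p hp q hq <| (adjN_iff (ht p hp).fst_lt_snd (ht q hq).fst_lt_snd).2 (Or.inl he)
    exact ⟨_, Multiset.card_le_card <| Multiset.le_filter.2
      ⟨htγ, fun p hp => memIsε_of_forall_snd_ne_fst ht hsep hp⟩⟩
  · intro ε
    refine ⟨γ.filter (memIsε s ε), Multiset.filter_le _ _, ?_, rfl⟩
    intro p hp q hq
    exact (Multiset.mem_filter.1 hp).2.not_adjN (Multiset.mem_filter.1 hq).2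

/-- For a combination γ ∈ ℕℐ(s), the independence number α(γ) equals the maximum over
ε ∈ {0,1}^s of Σ_{I ∈ ℐ(s,ε)} k_I.  Expressed as: every independent sub-multiset of γ
is bounded by one of these sums, and each such sum is attained by an independent
sub-multiset. -/
theorem stmt_12 (s : ℕ) (hs : 1 ≤ s) (γ : Multiset (ℕ × ℕ))
    (hγ : ∀ p ∈ γ, memIs s p) :
    (∀ t ≤ γ, (∀ p ∈ t, ∀ q ∈ t, ¬ AdjN p q) →
      ∃ ε : ℕ → Bool,
        Multiset.card t ≤ Multiset.card (γ.filter (fun p => memIsε s ε p))) ∧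
    (∀ ε : ℕ → Bool, ∃ t ≤ γ, (∀ p ∈ t, ∀ q ∈ t, ¬ AdjN p q) ∧
      Multiset.card t = Multiset.card (γ.filter (fun p => memIsε s ε p))) :=
  stmt_12_general s γ hγ
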